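/- arXiv:2308.03568 — 7 statements merged into one kernel-verified Lean document; each statement's English description precedes it below -/
import Mathlib

section
/- Let R be a ℚ-algebra and for an infinite tuple t = (t_0, t_1, ...) define the formal power series B_t(v) = v − Σ_{i≥0} (t_i / i!) v^i. For φ ∈ G (power series V + O(V²)) with a chosen square root √(φ'(V)) ∈ 1 + V R[[V]], define the action t ↦ t.φ = T by B_T(V) = √(φ'(V)) · B_t(φ(V)). Then this defines a right group action: t.(φ∘ψ) = (t.φ).ψ for all φ, ψ ∈ G, and t.id = t. -/
/-- Formal derivative of a power series. -/
noncomputable def d1 {R : Type*} [CommRing R] (f : PowerSeries R) : PowerSeries R :=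
  PowerSeries.mk fun n => (n + 1 : ℕ) • PowerSeries.coeff (n + 1) f

/-- Composition of formal power series `f(g(V))` (genuine composition whenever `g` has
zero constant term). -/
noncomputable def pcomp {R : Type*} [CommRing R] (f g : PowerSeries R) : PowerSeries R :=
  PowerSeries.mk fun n => ∑ᶠ k : ℕ, PowerSeries.coeff k f * PowerSeries.coeff n (g ^ k)

/-- `B_t(v) = v - ∑_{i≥0} (t_i / i!) v^i`. -/
noncomputable def Bser {R : Type*} [CommRing R] [Algebra ℚ R] (t : ℕ → R) : PowerSeries R :=
  PowerSeries.mk fun i => (if i = 1 then (1 : R) else 0) - (i.factorial : ℚ)⁻¹ • t i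

/-!
Under `t ↦ B_t` tuples correspond bijectively to power series, and the action becomes
`B ↦ √φ' · (B ∘ φ)`. Substitution is multiplicative and associative, and by the chain rule
`(√φ' ∘ ψ) · √ψ'` is a square root of `(φ ∘ ψ)'` with constant term `1`. Since `2` is invertible
such a square root is unique, so `√(φ ∘ ψ)' = (√φ' ∘ ψ) · √ψ'`; this cocycle identity is exactly
what makes the action a right action, and `√X' = 1` makes `X` act trivially.
-/

open PowerSeries

theorem eq_of_sq_eq_sq_of_isUnit_add {α : Type*} [CommRing α] {a b : α} (h : a ^ 2 = b ^ 2)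
    (hab : IsUnit (a + b)) : a = b := by
  have : (a - b) * (a + b) = 0 := by linear_combination h
  exact sub_eq_zero.mp (hab.mul_left_eq_zero.mp this)

namespace PowerSeries

variable {R : Type*} [CommRing R]

theorem d1_eq_derivative (f : R⟦X⟧) : d1 f = d⁄dX R f := by
  ext n
  simp [d1, coeff_derivative, mul_comm]

theorem pcomp_eq_subst (f : R⟦X⟧) {g : R⟦X⟧} (hg : constantCoeff g = 0) :
    pcomp f g = f.subst g := by
  ext n
  simp [pcomp, coeff_subst' (HasSubst.of_constantCoeff_zero' hg)]

theorem constantCoeff_subst_of_constantCoeff_eq_zero (f : R⟦X⟧) {g : R⟦X⟧}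
    (hg : constantCoeff g = 0) : constantCoeff (f.subst g) = constantCoeff f := by
  rw [← coeff_zero_eq_constantCoeff_apply, coeff_subst' (.of_constantCoeff_zero' hg),
    finsum_eq_single _ 0]
  · simp
  · intro d hd
    simp [hg, zero_pow hd]

theorem coeff_one_subst (f : R⟦X⟧) {g : R⟦X⟧} (hg : constantCoeff g = 0) :
    coeff 1 (f.subst g) = coeff 1 f * coeff 1 g := by
  have coeff_one_eq (h : R⟦X⟧) : coeff 1 h = constantCoeff (d⁄dX R h) := by
    simp [← coeff_zero_eq_constantCoeff_apply, coeff_derivative]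
  rw [coeff_one_eq, coeff_one_eq, coeff_one_eq, derivative_subst (.of_constantCoeff_zero' hg),
    map_mul, constantCoeff_subst_of_constantCoeff_eq_zero _ hg]

theorem eq_of_sq_eq_sq_of_constantCoeff_eq_one (h2 : IsUnit (2 : R)) {a b : R⟦X⟧}
    (h : a ^ 2 = b ^ 2) (ha : constantCoeff a = 1) (hb : constantCoeff b = 1) : a = b :=
  eq_of_sq_eq_sq_of_isUnit_add h <| isUnit_iff_constantCoeff.mpr <| by
    rwa [map_add, ha, hb, one_add_one_eq_two]

def IsDerivSqrt (sq : R⟦X⟧ → R⟦X⟧) : Prop :=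
  ∀ φ : R⟦X⟧, constantCoeff φ = 0 → coeff 1 φ = 1 → sq φ ^ 2 = d1 φ ∧ constantCoeff (sq φ) = 1

namespace IsDerivSqrt

variable {sq : R⟦X⟧ → R⟦X⟧}

theorem map_X (hsq : IsDerivSqrt sq) (h2 : IsUnit (2 : R)) : sq X = 1 := by
  obtain ⟨hsqX, hc⟩ := hsq X constantCoeff_X coeff_one_X
  refine eq_of_sq_eq_sq_of_constantCoeff_eq_one h2 ?_ hc constantCoeff_one
  rw [hsqX, d1_eq_derivative, derivative_X, one_pow]

theorem map_subst (hsq : IsDerivSqrt sq) (h2 : IsUnit (2 : R)) {φ ψ : R⟦X⟧}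
    (hφ0 : constantCoeff φ = 0) (hφ1 : coeff 1 φ = 1) (hψ0 : constantCoeff ψ = 0) (hψ1 : coeff 1 ψ = 1) :
    sq (φ.subst ψ) = (sq φ).subst ψ * sq ψ := by
  have hψ : HasSubst ψ := .of_constantCoeff_zero' hψ0
  obtain ⟨hφsq, hφc⟩ := hsq φ hφ0 hφ1
  obtain ⟨hψsq, hψc⟩ := hsq ψ hψ0 hψ1
  obtain ⟨hχsq, hχc⟩ := hsq (φ.subst ψ) (constantCoeff_subst_eq_zero hψ0 φ hφ0)
    (by rw [coeff_one_subst φ hψ0, hφ1, hψ1, one_mul])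
  refine eq_of_sq_eq_sq_of_constantCoeff_eq_one h2 ?_ hχc ?_
  · rw [hχsq, mul_pow, ← subst_pow hψ, hφsq, hψsq, d1_eq_derivative, d1_eq_derivative,
      d1_eq_derivative, derivative_subst hψ]
  · rw [map_mul, constantCoeff_subst_of_constantCoeff_eq_zero _ hψ0, hφc, hψc, one_mul]

end IsDerivSqrt

end PowerSeries

section Bser

variable {R : Type*} [CommRing R] [Algebra ℚ R]

theorem factorial_smul_sub_coeff_Bser (t : ℕ → R) (i : ℕ) :
    (i.factorial : ℚ) • ((if i = 1 then (1 : R) else 0) - coeff i (Bser t)) = t i := by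
  rw [Bser, coeff_mk, sub_sub_cancel, smul_smul, mul_inv_cancel₀ (by positivity), one_smul]

theorem Bser_injective : Function.Injective (Bser : (ℕ → R) → R⟦X⟧) := fun t t' h ↦
  funext fun i ↦ by rw [← factorial_smul_sub_coeff_Bser t, h, factorial_smul_sub_coeff_Bser]

theorem Bser_eq_of_forall_eq_factorial_smul {F : R⟦X⟧} {s : ℕ → R}
    (hs : ∀ i, s i = (i.factorial : ℚ) • ((if i = 1 then (1 : R) else 0) - coeff i F)) :
    Bser s = F := by
  ext i
  rw [Bser, coeff_mk, hs, smul_smul, inv_mul_cancel₀ (by positivity), one_smul, sub_sub_cancel]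

end Bser

/-- Let `R` be a ℚ-algebra, and let `sq` assign to each `φ ∈ G`
(i.e. `φ = V + O(V²)`) its square root `√(φ') ∈ 1 + V·R⟦V⟧` of the derivative
(characterized by `(sq φ)² = φ'` and constant coefficient `1`).  Define the action
`t ↦ t.φ = act t φ` on infinite tuples by `B_{t.φ}(V) = √(φ'(V)) · B_t(φ(V))`
(reading off the tuple from the coefficients of `B`).  Then this is a right group
action: `(t.φ).ψ = t.(φ∘ψ)` for all `φ, ψ ∈ G`, and `t.id = t`. -/
theorem groupaction_on_tuples {R : Type*} [CommRing R] [Algebra ℚ R]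
    (sq : PowerSeries R → PowerSeries R)
    (hsq : ∀ φ : PowerSeries R, PowerSeries.constantCoeff φ = 0 →
      PowerSeries.coeff 1 φ = 1 →
      (sq φ) ^ 2 = d1 φ ∧ PowerSeries.constantCoeff (sq φ) = 1)
    (act : (ℕ → R) → PowerSeries R → (ℕ → R))
    (hact : ∀ t φ i, act t φ i = (i.factorial : ℚ) •
      ((if i = 1 then (1 : R) else 0) - PowerSeries.coeff i (sq φ * pcomp (Bser t) φ)))
    (φ ψ : PowerSeries R)
    (hφ0 : PowerSeries.constantCoeff φ = 0) (hφ1 : PowerSeries.coeff 1 φ = 1)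
    (hψ0 : PowerSeries.constantCoeff ψ = 0) (hψ1 : PowerSeries.coeff 1 ψ = 1)
    (t : ℕ → R) :
    act (act t φ) ψ = act t (pcomp φ ψ) ∧ act t PowerSeries.X = t := by
  have h2 : IsUnit (2 : R) := by
    simpa only [map_ofNat] using (IsUnit.mk0 (2 : ℚ) two_ne_zero).map (algebraMap ℚ R)
  have hB (s : ℕ → R) {χ : PowerSeries R} (hχ : constantCoeff χ = 0) :
      Bser (act s χ) = sq χ * (Bser s).subst χ := by
    rw [← pcomp_eq_subst _ hχ]
    exact Bser_eq_of_forall_eq_factorial_smul (hact s χ)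
  have hψ : HasSubst ψ := .of_constantCoeff_zero' hψ0
  constructor
  · apply Bser_injective
    rw [pcomp_eq_subst φ hψ0, hB _ hψ0, hB _ hφ0, hB _ (constantCoeff_subst_eq_zero hψ0 φ hφ0),
      IsDerivSqrt.map_subst hsq h2 hφ0 hφ1 hψ0 hψ1, subst_mul hψ,
      subst_comp_subst_apply (.of_constantCoeff_zero' hφ0) hψ]
    ring
  · apply Bser_injective
    rw [hB _ constantCoeff_X, IsDerivSqrt.map_X hsq h2, one_mul, X_subst]
end

section
/- Let E(t) be the unique formal power series solution in R[[t_0, t_1, ...]] with zero constant term of the genus-zero Euler–Lagrange equation B_t(E(t)) = 0, i.e. E(t) = Σ_{i≥0} (t_i/i!) E(t)^i. Then E(t) = Σ_{n≥1} (1/n) Σ_{i_1+...+i_n = n−1} (t_{i_1}/i_1!) ··· (t_{i_n}/i_n!). -/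
/-!
Write `e_d(k)` for the coefficient of `t^d` in `E^k`. Expanding the last factor of
`E^(k+1) = E^k · E` by the fixed-point equation gives the recursion
`e_d(k+1) = ∑ᵢ (1/i!) e_{d-δᵢ}(k+i)`, which lowers the total degree `|d|` by one.
The Lagrange-inversion value `k (|d|-1)! / ∏ᵢ dᵢ! (i!)^{dᵢ}` (when `∑ i dᵢ + k = |d|`, else `0`)
satisfies the same recursion, since `∑ᵢ (k+i) dᵢ = k|d| + ∑ i dᵢ = (k+1)(|d|-1)`.
Strong induction on `|d|` identifies the two, and `k = 1` is the theorem.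
-/

open MvPowerSeries Finsupp Nat
open Finset.HasAntidiagonal (antidiagonal mem_antidiagonal)

namespace MvPowerSeries
variable {σ R : Type*} [CommSemiring R]

theorem coeff_pow_eq_zero_of_degree_lt {f : MvPowerSeries σ R} (hf : constantCoeff f = 0)
    {d : σ →₀ ℕ} {k : ℕ} (h : d.degree < k) : coeff d (f ^ k) = 0 :=
  coeff_of_lt_order <| (Nat.cast_lt.mpr h).trans_le (le_order_pow_of_constantCoeff_eq_zero k hf)

theorem coeff_X_mul_of_ne_zero (f : MvPowerSeries σ R) {i : σ} {d : σ →₀ ℕ} (h : d i ≠ 0) :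
    coeff d (X i * f) = coeff (d - single i 1) f := by
  rw [X_def, coeff_monomial_mul, if_pos (single_le_iff.mpr (Nat.one_le_iff_ne_zero.mpr h)),
    one_mul]

theorem coeff_X_mul_of_eq_zero (f : MvPowerSeries σ R) {i : σ} {d : σ →₀ ℕ} (h : d i = 0) :
    coeff d (X i * f) = 0 := by
  rw [X_def, coeff_monomial_mul, if_neg (by simp [single_le_iff, h])]

end MvPowerSeries

theorem Finsupp.degree_sub_single_add {σ : Type*} {d : σ →₀ ℕ} {i : σ} (h : d i ≠ 0) :
    (d - single i 1).degree + 1 = d.degree := by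
  conv_rhs => rw [← sub_add_single_one_cancel h, map_add, degree_single]

namespace LagrangeInversion

def factorialDenom (d : ℕ →₀ ℕ) : ℕ := d.prod fun i m => m ! * i ! ^ m

theorem factorialDenom_pos (d : ℕ →₀ ℕ) : 0 < factorialDenom d :=
  Finset.prod_pos fun _ _ => by positivity

theorem factorialDenom_eq_mul_sub_single {d : ℕ →₀ ℕ} {i : ℕ} (h : d i ≠ 0) :
    factorialDenom d = d i * i ! * factorialDenom (d - single i 1) := by
  have hg : ∀ j, (fun j m => m ! * j ! ^ m) j 0 = 1 := by simp
  have herase : (d - single i 1).erase i = d.erase i := by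
    ext j
    rcases eq_or_ne j i with rfl | hj <;> simp [*]
  obtain ⟨m, hm⟩ : ∃ m, d i = m + 1 := ⟨d i - 1, by omega⟩
  rw [factorialDenom, factorialDenom, ← mul_prod_erase' d i _ hg,
    ← mul_prod_erase' (d - single i 1) i _ hg, herase,
    tsub_apply, single_eq_same, hm, Nat.add_sub_cancel, factorial_succ, pow_succ]
  ring

/-- The coefficient of `t^d` in `E^k` for `d ≠ 0`; at `d = 0` it is `0`, not `[k = 0]`. -/
noncomputable def lagrangeCoeff (k : ℕ) (d : ℕ →₀ ℕ) : ℚ :=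
  if weight id d + k = d.degree then k * (d.degree - 1)! / factorialDenom d else 0

theorem lagrangeCoeff_zero_left (d : ℕ →₀ ℕ) : lagrangeCoeff 0 d = 0 := by
  simp [lagrangeCoeff]

theorem lagrangeCoeff_single (i k : ℕ) :
    lagrangeCoeff (k + 1) (single i 1) = if i = 0 ∧ k = 0 then 1 else 0 := by
  by_cases h : i = 0 ∧ k = 0
  · simp [lagrangeCoeff, factorialDenom, weight_single, h]
  · rw [lagrangeCoeff, if_neg (by simp [weight_single]; omega), if_neg h]

theorem sum_add_mul_eq_mul_degree_add_weight (d : ℕ →₀ ℕ) (k : ℕ) :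
    ∑ i ∈ d.support, (k + i) * d i = k * d.degree + weight id d := by
  rw [degree_apply, weight_apply, Finsupp.sum, Finset.mul_sum, ← Finset.sum_add_distrib]
  exact Finset.sum_congr rfl fun i _ => by simp only [id, smul_eq_mul]; ring

theorem sum_lagrangeCoeff_sub_single {d : ℕ →₀ ℕ} (hd : 2 ≤ d.degree) (k : ℕ) :
    ∑ i ∈ d.support, (i ! : ℚ)⁻¹ * lagrangeCoeff (k + i) (d - single i 1) =
      lagrangeCoeff (k + 1) d := by
  obtain ⟨m, hm⟩ : ∃ m, d.degree = m + 2 := ⟨d.degree - 2, by omega⟩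
  have hterm : ∀ i ∈ d.support, (i ! : ℚ)⁻¹ * lagrangeCoeff (k + i) (d - single i 1) =
      if weight id d + (k + 1) = d.degree then
        (((k + i) * d i : ℕ) : ℚ) * (m ! / factorialDenom d) else 0 := by
    intro i hi
    have hdi := mem_support_iff.mp hi
    have hdeg := degree_sub_single_add hdi
    have hwt := weight_sub_single_add (w := id) hdi
    rw [lagrangeCoeff, factorialDenom_eq_mul_sub_single hdi]
    by_cases hc : weight id d + (k + 1) = d.degree
    · have hdeg' : (d - single i 1).degree - 1 = m := by omega
      rw [if_pos (by simp only [id] at hwt; omega), if_pos hc, hdeg']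
      have := factorialDenom_pos (d - single i 1)
      have : (i ! : ℚ) ≠ 0 := by positivity
      field_simp
      push_cast
      ring
    · rw [if_neg (by simp only [id] at hwt; omega), if_neg hc, mul_zero]
  rw [Finset.sum_congr rfl hterm, lagrangeCoeff]
  split_ifs with hc
  · rw [← Finset.sum_mul, ← Nat.cast_sum, sum_add_mul_eq_mul_degree_add_weight,
      show k * d.degree + weight id d = (k + 1) * (m + 1) by rw [hm] at hc ⊢; linarith, hm]
    push_cast [factorial_succ]
    ring
  · simp

section FixedPoint

variable {E : MvPowerSeries ℕ ℚ} (hE0 : constantCoeff E = 0)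
  (hEeq : ∀ d : ℕ →₀ ℕ, coeff d E =
    ∑ i ∈ Finset.range (d.degree + 1), (i ! : ℚ)⁻¹ * coeff d (X i * E ^ i))
include hE0 hEeq

theorem coeff_eq_sum_of_support_subset {d : ℕ →₀ ℕ} {s : Finset ℕ} (hs : d.support ⊆ s) :
    coeff d E = ∑ i ∈ s, (i ! : ℚ)⁻¹ * coeff d (X i * E ^ i) := by
  have hsupp : ∀ i, (i ! : ℚ)⁻¹ * coeff d (X i * E ^ i) ≠ 0 → i ∈ d.support ∧ i ≤ d.degree := by
    intro i hi
    have hdi : d i ≠ 0 := fun h => hi (by simp [coeff_X_mul_of_eq_zero _ h])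
    refine ⟨mem_support_iff.mpr hdi, ?_⟩
    by_contra! hlt
    refine hi ?_
    rw [coeff_X_mul_of_ne_zero _ hdi, coeff_pow_eq_zero_of_degree_lt hE0, mul_zero]
    have := degree_sub_single_add hdi
    omega
  rw [hEeq d, ← finsum_eq_sum_of_support_subset _ fun i hi => ?_,
    finsum_eq_sum_of_support_subset _ fun i hi => ?_]
  · exact hs (hsupp i hi).1
  · exact Finset.mem_range_succ_iff.mpr (hsupp i hi).2

theorem coeff_pow_succ_eq_sum (d : ℕ →₀ ℕ) (k : ℕ) :
    coeff d (E ^ (k + 1)) =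
      ∑ i ∈ d.support, (i ! : ℚ)⁻¹ * coeff (d - single i 1) (E ^ (k + i)) := by
  calc coeff d (E ^ (k + 1))
      = ∑ p ∈ antidiagonal d, ∑ i ∈ d.support,
          (i ! : ℚ)⁻¹ * (coeff p.1 (E ^ k) * coeff p.2 (X i * E ^ i)) := by
        rw [pow_succ, coeff_mul]
        refine Finset.sum_congr rfl fun p hp => ?_
        have hle : p.2 ≤ d := le_of_add_le_right (mem_antidiagonal.mp hp).le
        rw [coeff_eq_sum_of_support_subset hE0 hEeq (support_mono hle), Finset.mul_sum]
        exact Finset.sum_congr rfl fun i _ => by ring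
    _ = ∑ i ∈ d.support, (i ! : ℚ)⁻¹ * coeff d (X i * E ^ (k + i)) := by
        rw [Finset.sum_comm]
        refine Finset.sum_congr rfl fun i _ => ?_
        rw [← Finset.mul_sum, ← coeff_mul, pow_add]
        ring_nf
    _ = _ := Finset.sum_congr rfl fun i hi => by
        rw [coeff_X_mul_of_ne_zero _ (mem_support_iff.mp hi)]

theorem coeff_pow_eq_lagrangeCoeff {d : ℕ →₀ ℕ} (hd : d ≠ 0) (k : ℕ) :
    coeff d (E ^ k) = lagrangeCoeff k d := by
  induction hn : d.degree using Nat.strong_induction_on generalizing d k with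
  | _ n ih =>
  cases k with
  | zero => rw [pow_zero, coeff_one, if_neg hd, lagrangeCoeff_zero_left]
  | succ k =>
    have hn0 : n ≠ 0 := hn ▸ (degree_eq_zero_iff d).not.mpr hd
    rcases (show n = 1 ∨ 2 ≤ n by omega) with rfl | hn2
    · obtain ⟨i, rfl⟩ := (sum_eq_one_iff d).mp hn
      rw [coeff_pow_succ_eq_sum hE0 hEeq, support_single _ one_ne_zero,
        Finset.sum_singleton, tsub_self, coeff_zero_eq_constantCoeff, map_pow, hE0,
        lagrangeCoeff_single]
      split_ifs with h
      · simp [h]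
      · simp only [zero_pow (show k + i ≠ 0 by omega), mul_zero]
    · rw [coeff_pow_succ_eq_sum hE0 hEeq, ← sum_lagrangeCoeff_sub_single (hn ▸ hn2) k]
      refine Finset.sum_congr rfl fun i hi => ?_
      have hdeg := degree_sub_single_add (mem_support_iff.mp hi)
      have hne : d - single i 1 ≠ 0 := fun h0 => by simp [h0] at hdeg; omega
      rw [ih _ (by omega) hne _ rfl]

end FixedPoint

end LagrangeInversion

/-- Let `E(t)` be the unique formal power series in the variables
`t₀, t₁, …` (here `tᵢ = Xᵢ` in `MvPowerSeries ℕ ℚ`) with zero constant term solving the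
genus-zero Euler–Lagrange equation `B_t(E) = 0`, i.e. `E = ∑_{i≥0} (tᵢ/i!) Eⁱ`
(stated coefficientwise; the cutoff `|d| + 1` is harmless since `[monomial d](Xᵢ·Eⁱ) = 0`
for `i` beyond it).  Then
`E(t) = ∑_{n≥1} (1/n) ∑_{i₁+⋯+iₙ = n−1} (t_{i₁}/i₁!) ⋯ (t_{iₙ}/iₙ!)`,
equivalently, the coefficient of the monomial `∏ tᵢ^{dᵢ}` equals
`(n−1)! / ∏ᵢ (dᵢ! · (i!)^{dᵢ})` if `∑ i·dᵢ + 1 = n := ∑ dᵢ`, and `0` otherwise. -/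
theorem E_series_explicit_formula
    (E : MvPowerSeries ℕ ℚ)
    (hE0 : MvPowerSeries.constantCoeff E = 0)
    (hEeq : ∀ d : ℕ →₀ ℕ,
      MvPowerSeries.coeff d E =
        ∑ i ∈ Finset.range ((d.sum fun _ m => m) + 1),
          (i.factorial : ℚ)⁻¹ * MvPowerSeries.coeff d (MvPowerSeries.X i * E ^ i)) :
    ∀ d : ℕ →₀ ℕ,
      MvPowerSeries.coeff d E =
        if (d.sum fun i m => i * m) + 1 = d.sum fun _ m => m then
          (((d.sum fun _ m => m) - 1).factorial : ℚ) /
            ((d.prod fun i m => m.factorial * i.factorial ^ m : ℕ) : ℚ)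
        else 0 := by
  intro d
  rcases eq_or_ne d 0 with rfl | hd
  · simp [hE0]
  have hwt : weight id d = d.sum fun i m => i * m := by
    rw [weight_apply]
    exact Finsupp.sum_congr fun i _ => by simp [mul_comm]
  rw [← pow_one E, LagrangeInversion.coeff_pow_eq_lagrangeCoeff hE0 hEeq hd,
    LagrangeInversion.lagrangeCoeff, hwt, Nat.cast_one, one_mul]
  rfl
end

section
/- Let E(t) ∈ R[[t]] satisfy B_t(E(t)) = 0 (the unique solution with zero constant term), and let t, T be related by T = t.φ, i.e. B_T(V) = √(φ'(V)) B_t(φ(V)). Then φ(E(T)) = E(t), where E(T) is regarded as a power series in t via the affine change of variables. -/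
/-!
Substituting `Ē` into `B_T(V) = √(φ'(V)) · B_t(φ(V))` gives `0 = √(φ'(Ē)) · B_t(φ(Ē))`.
The first factor has constant term `1`, hence is a unit, so `φ(Ē)` is a root of `B_t`
without constant term. Such a root is unique (its coefficient of degree `d` is determined by
the lower ones), so `φ(Ē) = E`.
-/

lemma coeff_pcomp_eq_sum {R : Type*} [CommRing R] (f : PowerSeries R) {φ : PowerSeries R}
    (hφ : PowerSeries.constantCoeff φ = 0) {k N : ℕ} (hk : k < N) :
    PowerSeries.coeff k (pcomp f φ) =
      ∑ j ∈ Finset.range N, PowerSeries.coeff j f * PowerSeries.coeff k (φ ^ j) := by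
  refine (PowerSeries.coeff_mk _ _).trans (finsum_eq_sum_of_support_subset _ fun j hj => ?_)
  by_contra hjN
  have hkj : k < j := hk.trans_le (by simpa using hjN)
  have hdvd : PowerSeries.X ^ j ∣ φ ^ j := pow_dvd_pow_of_dvd (PowerSeries.X_dvd_iff.mpr hφ) j
  exact hj (by beta_reduce; rw [PowerSeries.X_pow_dvd_iff.mp hdvd k hkj, mul_zero])

lemma Bser_eq_X_sub {A : Type*} [CommRing A] [Algebra ℚ A] (t : ℕ → A) :
    Bser t = PowerSeries.X - PowerSeries.mk fun i => (i.factorial : ℚ)⁻¹ • t i := by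
  ext i
  simp [Bser, PowerSeries.coeff_X]

lemma Bser_eq_of_eq_factorial_smul {A : Type*} [CommRing A] [Algebra ℚ A] {T : ℕ → A}
    {P : PowerSeries A}
    (hT : ∀ i, T i = (i.factorial : ℚ) • ((if i = 1 then 1 else 0) - PowerSeries.coeff i P)) :
    Bser T = P := by
  ext i
  rw [Bser, PowerSeries.coeff_mk, hT, smul_smul,
    inv_mul_cancel₀ (Nat.cast_ne_zero.mpr i.factorial_ne_zero), one_smul, sub_sub_cancel]

namespace MvPowerSeries

open Finsupp

variable {σ R : Type*} [CommRing R]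

lemma coeff_mul_pow_eq_zero_of_degree_lt {g : MvPowerSeries σ R} (hg : constantCoeff g = 0)
    (c : MvPowerSeries σ R) {n : ℕ} {d : σ →₀ ℕ} (hd : degree d < n) :
    coeff d (c * g ^ n) = 0 :=
  coeff_of_lt_order <| (Nat.cast_lt.mpr hd).trans_le <|
    (le_order_pow_of_constantCoeff_eq_zero n hg).trans (le_add_self.trans le_order_mul)

lemma coeff_polynomial_eval_congr {g : MvPowerSeries σ R} (hg : constantCoeff g = 0)
    {p q : Polynomial (MvPowerSeries σ R)} {N : ℕ} (hpq : ∀ k < N, p.coeff k = q.coeff k)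
    {d : σ →₀ ℕ} (hd : degree d < N) : coeff d (p.eval g) = coeff d (q.eval g) := by
  obtain ⟨r, hr⟩ : Polynomial.X ^ N ∣ p - q :=
    Polynomial.X_pow_dvd_iff.mpr fun k hk => by rw [Polynomial.coeff_sub, hpq k hk, sub_self]
  have hdiff := congrArg (fun x => coeff d (x.eval g)) hr
  simp only [Polynomial.eval_sub, Polynomial.eval_mul, Polynomial.eval_pow, Polynomial.eval_X,
    map_sub, mul_comm (g ^ N)] at hdiff
  rwa [coeff_mul_pow_eq_zero_of_degree_lt hg _ hd, sub_eq_zero] at hdiff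

/-- `f(g)`, computed in degree `d` from the truncation of `f` below `degree d + 1`: when `g` has
no constant term, the higher powers of `g` do not contribute in degree `d`. -/
noncomputable def evalAt (f : PowerSeries (MvPowerSeries σ R)) (g : MvPowerSeries σ R) :
    MvPowerSeries σ R :=
  fun d => coeff d ((PowerSeries.trunc (degree d + 1) f).eval g)

variable {g : MvPowerSeries σ R}

lemma coeff_evalAt_eq_coeff_eval_trunc (hg : constantCoeff g = 0)
    (f : PowerSeries (MvPowerSeries σ R)) {N : ℕ} {d : σ →₀ ℕ} (hd : degree d < N) :
    coeff d (evalAt f g) = coeff d ((PowerSeries.trunc N f).eval g) := by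
  refine coeff_polynomial_eval_congr hg (fun k hk => ?_) (Nat.lt_succ_self _)
  rw [PowerSeries.coeff_trunc, PowerSeries.coeff_trunc, if_pos hk, if_pos (by omega)]

lemma coeff_evalAt_eq_sum (hg : constantCoeff g = 0) (f : PowerSeries (MvPowerSeries σ R))
    {N : ℕ} {d : σ →₀ ℕ} (hd : degree d < N) :
    coeff d (evalAt f g) = ∑ k ∈ Finset.range N, coeff d (PowerSeries.coeff k f * g ^ k) := by
  rw [coeff_evalAt_eq_coeff_eval_trunc hg f hd, Polynomial.eval,
    PowerSeries.eval₂_trunc_eq_sum_range, map_sum]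
  rfl

lemma coeff_evalAt_congr (hg : constantCoeff g = 0) {f₁ f₂ : PowerSeries (MvPowerSeries σ R)}
    {N : ℕ} (hf : ∀ k < N, PowerSeries.coeff k f₁ = PowerSeries.coeff k f₂)
    {d : σ →₀ ℕ} (hd : degree d < N) : coeff d (evalAt f₁ g) = coeff d (evalAt f₂ g) := by
  rw [coeff_evalAt_eq_sum hg f₁ hd, coeff_evalAt_eq_sum hg f₂ hd]
  exact Finset.sum_congr rfl fun k hk => by rw [hf k (Finset.mem_range.mp hk)]

lemma constantCoeff_evalAt (f : PowerSeries (MvPowerSeries σ R)) :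
    constantCoeff (evalAt f g) = constantCoeff (PowerSeries.constantCoeff f) := by
  change coeff 0 ((PowerSeries.trunc (degree 0 + 1) f).eval₂ (RingHom.id _) g) = _
  rw [PowerSeries.eval₂_trunc_eq_sum_range, map_zero, Finset.sum_range_one, pow_zero, mul_one,
    RingHom.id_apply, PowerSeries.coeff_zero_eq_constantCoeff_apply, coeff_zero_eq_constantCoeff]

lemma evalAt_mul (hg : constantCoeff g = 0) (f₁ f₂ : PowerSeries (MvPowerSeries σ R)) :
    evalAt (f₁ * f₂) g = evalAt f₁ g * evalAt f₂ g := by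
  classical
  ext d
  set N := degree d + 1
  have hN : ∀ {e : σ →₀ ℕ}, e ≤ d → degree e < N := fun he => Nat.lt_succ_of_le (degree_mono he)
  rw [coeff_evalAt_eq_coeff_eval_trunc hg _ (hN le_rfl), ← PowerSeries.trunc_trunc_mul_trunc,
    ← Polynomial.coe_mul,
    coeff_polynomial_eval_congr hg (q := PowerSeries.trunc N f₁ * PowerSeries.trunc N f₂)
      (fun k hk => by rw [PowerSeries.coeff_trunc, if_pos hk, Polynomial.coeff_coe]) (hN le_rfl),
    Polynomial.eval_mul, coeff_mul, coeff_mul]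
  refine Finset.sum_congr rfl fun p hp => ?_
  rw [Finset.HasAntidiagonal.mem_antidiagonal] at hp
  rw [coeff_evalAt_eq_coeff_eval_trunc hg f₁ (hN (hp ▸ le_self_add)),
    coeff_evalAt_eq_coeff_eval_trunc hg f₂ (hN (hp ▸ le_add_self))]

lemma evalAt_C (hg : constantCoeff g = 0) (a : MvPowerSeries σ R) :
    evalAt (PowerSeries.C a) g = a := by
  ext d
  simp only [coeff_evalAt_eq_sum hg _ (Nat.lt_succ_self _), PowerSeries.coeff_C, ite_mul,
    zero_mul, apply_ite (coeff d), map_zero, Finset.sum_ite_eq', Finset.mem_range]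
  rw [if_pos (by omega), pow_zero, mul_one]

noncomputable def evalAtHom (hg : constantCoeff g = 0) :
    PowerSeries (MvPowerSeries σ R) →+* MvPowerSeries σ R where
  toFun f := evalAt f g
  map_one' := by rw [← map_one PowerSeries.C]; exact evalAt_C hg 1
  map_mul' := evalAt_mul hg
  map_zero' := by
    ext d
    simp [coeff_evalAt_eq_sum hg 0 (Nat.lt_succ_self _)]
  map_add' f₁ f₂ := by
    ext d
    simp [coeff_evalAt_eq_sum hg _ (Nat.lt_succ_self _), add_mul, Finset.sum_add_distrib]

@[simp]
lemma evalAtHom_apply (hg : constantCoeff g = 0) (f : PowerSeries (MvPowerSeries σ R)) :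
    evalAtHom hg f = evalAt f g := rfl

lemma evalAt_X (hg : constantCoeff g = 0) : evalAt PowerSeries.X g = g := by
  ext d
  simp only [coeff_evalAt_eq_sum hg _ (N := degree d + 2) (d := d) (by omega),
    PowerSeries.coeff_X, ite_mul, zero_mul, apply_ite (coeff d), map_zero, Finset.sum_ite_eq',
    Finset.mem_range]
  rw [if_pos (by omega), one_mul, pow_one]

lemma evalAt_pcomp (hg : constantCoeff g = 0) (f : PowerSeries (MvPowerSeries σ R))
    {φ : PowerSeries (MvPowerSeries σ R)} (hφ : PowerSeries.constantCoeff φ = 0) :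
    evalAt (pcomp f φ) g = evalAt f (evalAt φ g) := by
  have hφg : constantCoeff (evalAt φ g) = 0 := by rw [constantCoeff_evalAt, hφ, map_zero]
  ext d
  set N := degree d + 1
  set P := ∑ j ∈ Finset.range N, PowerSeries.C (PowerSeries.coeff j f) * φ ^ j
  have hP : ∀ k < N, PowerSeries.coeff k (pcomp f φ) = PowerSeries.coeff k P := fun k hk => by
    simp only [P, map_sum, PowerSeries.coeff_C_mul, coeff_pcomp_eq_sum f hφ hk]
  calc coeff d (evalAt (pcomp f φ) g) = coeff d (evalAtHom hg P) :=
        coeff_evalAt_congr hg hP (Nat.lt_succ_self _)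
    _ = ∑ j ∈ Finset.range N, coeff d (PowerSeries.coeff j f * evalAt φ g ^ j) := by
        simp only [P, map_sum, map_mul, map_pow, evalAtHom_apply, evalAt_C hg]
    _ = coeff d (evalAt f (evalAt φ g)) := (coeff_evalAt_eq_sum hφg f (Nat.lt_succ_self _)).symm

lemma evalAt_Bser_eq_zero_iff [Algebra ℚ R] (hg : constantCoeff g = 0)
    (t : ℕ → MvPowerSeries σ R) :
    evalAt (Bser t) g = 0 ↔ ∀ d, coeff d g =
      ∑ i ∈ Finset.range (degree d + 1), (i.factorial : ℚ)⁻¹ • coeff d (t i * g ^ i) := by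
  rw [Bser_eq_X_sub, ← evalAtHom_apply hg, map_sub, evalAtHom_apply, evalAt_X hg, sub_eq_zero,
    MvPowerSeries.ext_iff]
  refine forall_congr' fun d => ?_
  rw [evalAtHom_apply, coeff_evalAt_eq_sum hg _ (Nat.lt_succ_self _)]
  simp

lemma coeff_pow_congr {E F : MvPowerSeries σ R} {d : σ →₀ ℕ}
    (h : ∀ e ≤ d, coeff e E = coeff e F) (n : ℕ) : coeff d (E ^ n) = coeff d (F ^ n) := by
  classical
  induction n generalizing d with
  | zero => rfl
  | succ n ih =>
    rw [pow_succ, pow_succ, coeff_mul, coeff_mul]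
    refine Finset.sum_congr rfl fun p hp => ?_
    rw [Finset.HasAntidiagonal.mem_antidiagonal] at hp
    rw [ih fun e he => h e (he.trans (hp ▸ le_self_add)), h p.2 (hp ▸ le_add_self)]

lemma coeff_mul_pow_congr {t : MvPowerSeries σ R} (ht : constantCoeff t = 0)
    {E F : MvPowerSeries σ R} {d : σ →₀ ℕ} (h : ∀ e < d, coeff e E = coeff e F) (n : ℕ) :
    coeff d (t * E ^ n) = coeff d (t * F ^ n) := by
  classical
  rw [coeff_mul, coeff_mul]
  refine Finset.sum_congr rfl fun p hp => ?_
  rw [Finset.HasAntidiagonal.mem_antidiagonal] at hp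
  rcases eq_or_ne p.1 0 with hp₁ | hp₁
  · rw [hp₁, coeff_zero_eq_constantCoeff_apply, ht, zero_mul, zero_mul]
  · have hlt : p.2 < d := lt_of_le_of_ne (hp ▸ le_add_self) fun heq => hp₁ (by
      simpa [heq] using hp)
    rw [coeff_pow_congr (fun e he => h e (he.trans_lt hlt))]

/-- Fixed points of `X ↦ ∑ᵢ aᵢ tᵢ Xⁱ` with all `tᵢ` of positive order are unique: the
coefficient of `d` on the right only involves coefficients of `X` strictly below `d`. -/
lemma eq_of_coeff_eq_sum_coeff_mul_pow {t : ℕ → MvPowerSeries σ R}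
    (ht : ∀ i, constantCoeff (t i) = 0) (a : ℕ → R) (s : (σ →₀ ℕ) → Finset ℕ)
    {E F : MvPowerSeries σ R}
    (hE : ∀ d, coeff d E = ∑ i ∈ s d, a i * coeff d (t i * E ^ i))
    (hF : ∀ d, coeff d F = ∑ i ∈ s d, a i * coeff d (t i * F ^ i)) : E = F := by
  ext d
  induction d using WellFoundedLT.induction with
  | _ d ih =>
    rw [hE, hF]
    exact Finset.sum_congr rfl fun i _ => by rw [coeff_mul_pow_congr (ht i) ih]

end MvPowerSeries

open MvPowerSeries in
theorem phi_of_E_T_eq_E_t_general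
    (φ : PowerSeries ℚ)
    (hφ0 : PowerSeries.constantCoeff φ = 0)
    (s : PowerSeries (MvPowerSeries ℕ ℚ))
    (hs0 : PowerSeries.constantCoeff s = 1)
    (T : ℕ → MvPowerSeries ℕ ℚ)
    (hT : ∀ i, T i = (i.factorial : ℚ) •
      ((if i = 1 then (1 : MvPowerSeries ℕ ℚ) else 0) -
        PowerSeries.coeff i
          (s * pcomp (Bser fun j => (MvPowerSeries.X j : MvPowerSeries ℕ ℚ))
            (PowerSeries.map (algebraMap ℚ (MvPowerSeries ℕ ℚ)) φ))))
    (E Ebar : MvPowerSeries ℕ ℚ)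
    (hE : ∀ d : ℕ →₀ ℕ, MvPowerSeries.coeff d E =
      ∑ i ∈ Finset.range ((d.sum fun _ m => m) + 1),
        (i.factorial : ℚ)⁻¹ * MvPowerSeries.coeff d (MvPowerSeries.X i * E ^ i))
    (hEb0 : MvPowerSeries.constantCoeff Ebar = 0)
    (hEb : ∀ d : ℕ →₀ ℕ, MvPowerSeries.coeff d Ebar =
      ∑ i ∈ Finset.range ((d.sum fun _ m => m) + 1),
        (i.factorial : ℚ)⁻¹ * MvPowerSeries.coeff d (T i * Ebar ^ i)) :
    ∀ d : ℕ →₀ ℕ, MvPowerSeries.coeff d E =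
      ∑ k ∈ Finset.range ((d.sum fun _ m => m) + 1),
        PowerSeries.coeff k φ * MvPowerSeries.coeff d (Ebar ^ k) := by
  have hdeg : ∀ d : ℕ →₀ ℕ, (d.sum fun _ m => m) = Finsupp.degree d := fun _ => rfl
  simp only [hdeg] at hE hEb ⊢
  set B := Bser fun j => (X j : MvPowerSeries ℕ ℚ)
  set φK := PowerSeries.map (algebraMap ℚ (MvPowerSeries ℕ ℚ)) φ
  have hφK : PowerSeries.constantCoeff φK = 0 := by
    rw [← PowerSeries.coeff_zero_eq_constantCoeff_apply, PowerSeries.coeff_map,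
      PowerSeries.coeff_zero_eq_constantCoeff_apply, hφ0, map_zero]
  set F := evalAt φK Ebar
  have hF0 : constantCoeff F = 0 := by rw [constantCoeff_evalAt, hφK, map_zero]
  have hBT_root : evalAt (s * pcomp B φK) Ebar = 0 := by
    rw [← Bser_eq_of_eq_factorial_smul hT]
    exact (evalAt_Bser_eq_zero_iff hEb0 T).mpr (by simpa only [smul_eq_mul] using hEb)
  have hs_unit : IsUnit (evalAt s Ebar) := by
    rw [isUnit_iff_constantCoeff, constantCoeff_evalAt, hs0, map_one]
    exact isUnit_one
  have hF_root : evalAt B F = 0 := by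
    rwa [← evalAt_pcomp hEb0 B hφK, ← hs_unit.mul_right_eq_zero, ← evalAt_mul hEb0]
  have hEF : E = F := by
    refine eq_of_coeff_eq_sum_coeff_mul_pow constantCoeff_X (fun i => (i.factorial : ℚ)⁻¹)
      (fun d => Finset.range (Finsupp.degree d + 1)) hE ?_
    simpa only [smul_eq_mul] using (evalAt_Bser_eq_zero_iff hF0 _).mp hF_root
  intro d
  rw [hEF, coeff_evalAt_eq_sum hEb0 φK (Nat.lt_succ_self _)]
  refine Finset.sum_congr rfl fun k _ => ?_
  rw [PowerSeries.coeff_map, ← Algebra.smul_def, coeff_smul]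

/-- Work in `K = ℚ[[t₀, t₁, …]]` with `tⱼ = Xⱼ`.  Let `φ ∈ G`
(a series `V + O(V²)` over ℚ), `s = √(φ')` (the square root of `φ'` with constant
term `1`), and let `T = t.φ` be the tuple defined by `B_T(V) = √(φ'(V)) B_t(φ(V))`.
Let `E` (resp. `Ē`) be the unique power series with zero constant term satisfying
`B_t(E) = 0` (resp. `B_T(Ē) = 0`), stated coefficientwise.  Then `φ(Ē) = E`,
i.e. `coeff_d E = ∑_k φ_k · coeff_d (Ēᵏ)` for every monomial `d`. -/
theorem phi_of_E_T_eq_E_t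
    (φ : PowerSeries ℚ)
    (hφ0 : PowerSeries.constantCoeff φ = 0) (hφ1 : PowerSeries.coeff 1 φ = 1)
    (s : PowerSeries (MvPowerSeries ℕ ℚ))
    (hs2 : s ^ 2 = d1 (PowerSeries.map (algebraMap ℚ (MvPowerSeries ℕ ℚ)) φ))
    (hs0 : PowerSeries.constantCoeff s = 1)
    (T : ℕ → MvPowerSeries ℕ ℚ)
    (hT : ∀ i, T i = (i.factorial : ℚ) •
      ((if i = 1 then (1 : MvPowerSeries ℕ ℚ) else 0) -
        PowerSeries.coeff i
          (s * pcomp (Bser fun j => (MvPowerSeries.X j : MvPowerSeries ℕ ℚ))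
            (PowerSeries.map (algebraMap ℚ (MvPowerSeries ℕ ℚ)) φ))))
    (E Ebar : MvPowerSeries ℕ ℚ)
    (hE0 : MvPowerSeries.constantCoeff E = 0)
    (hE : ∀ d : ℕ →₀ ℕ, MvPowerSeries.coeff d E =
      ∑ i ∈ Finset.range ((d.sum fun _ m => m) + 1),
        (i.factorial : ℚ)⁻¹ * MvPowerSeries.coeff d (MvPowerSeries.X i * E ^ i))
    (hEb0 : MvPowerSeries.constantCoeff Ebar = 0)
    (hEb : ∀ d : ℕ →₀ ℕ, MvPowerSeries.coeff d Ebar =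
      ∑ i ∈ Finset.range ((d.sum fun _ m => m) + 1),
        (i.factorial : ℚ)⁻¹ * MvPowerSeries.coeff d (T i * Ebar ^ i)) :
    ∀ d : ℕ →₀ ℕ, MvPowerSeries.coeff d E =
      ∑ k ∈ Finset.range ((d.sum fun _ m => m) + 1),
        PowerSeries.coeff k φ * MvPowerSeries.coeff d (Ebar ^ k) :=
  phi_of_E_T_eq_E_t_general φ hφ0 s hs0 T hT E Ebar hE hEb0 hEb
end

section
/- The formal power series E(t) defined by B_t(E(t)) = 0 satisfies the Riemann–Hopf hierarchy: ∂E/∂t_i = (E^i / i!) · ∂E/∂t_0 for every i ≥ 0. -/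
/-- Formal partial derivative `∂/∂tⱼ` on `ℚ[[t₀, t₁, …]]`. -/
noncomputable def pd (j : ℕ) (F : MvPowerSeries ℕ ℚ) : MvPowerSeries ℕ ℚ :=
  fun d => (d j + 1 : ℕ) • MvPowerSeries.coeff (d + Finsupp.single j 1) F

/-!
Write `E = ∑ cᵢ tᵢ Eⁱ` (here `cᵢ = 1/i!`). Since `E` has no constant term, the `i`-th summand
has order `> i`, so the series converges coefficientwise, and `∂ⱼ` is continuous for that
topology. Differentiating termwise gives `∂ⱼE = cⱼ Eʲ + G ∂ⱼE` with `G = ∑ i cᵢ tᵢ Eⁱ⁻¹`, i.e.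
`(1 - G) ∂ⱼE = cⱼ Eʲ` for every `j`. For `j = 0` this reads `(1 - G) ∂₀E = c₀`, hence
`c₀ ∂ᵢE = ∂ᵢE (1 - G) ∂₀E = cᵢ Eⁱ ∂₀E` without ever inverting `1 - G`.
-/

open Filter Nat

namespace MvPowerSeries

open WithPiTopology

theorem le_order_smul_X_mul_pow {σ R : Type*} [CommSemiring R] {f : MvPowerSeries σ R}
    (hf : constantCoeff f = 0) (a : R) (k : σ) (n : ℕ) :
    (n + 1 : ℕ∞) ≤ (a • (X k * f ^ n)).order := by
  refine le_trans ?_ le_order_smul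
  calc (n + 1 : ℕ∞) = 1 + n := add_comm _ _
    _ ≤ (X k).order + (f ^ n).order := by
        gcongr
        · exact one_le_order_iff_constCoeff_eq_zero.mpr (constantCoeff_X k)
        · exact le_order_pow_of_constantCoeff_eq_zero n hf
    _ ≤ _ := le_order_mul

theorem WithPiTopology.continuous_pderiv {σ R : Type*} [CommSemiring R] [TopologicalSpace R]
    [ContinuousMul R] (i : σ) : Continuous (pderiv R i) :=
  continuous_pi fun d => ((continuous_coeff R _).mul continuous_const).congr
    fun f => (coeff_pderiv f d).symm

section CommSemiring

variable {R : Type*} [CommSemiring R] [TopologicalSpace R] {c : ℕ → R} {E : MvPowerSeries ℕ R}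

theorem hasSum_smul_X_mul_pow_of_coeff_eq (hE0 : constantCoeff E = 0)
    (hE : ∀ d, coeff d E = ∑ i ∈ Finset.range (d.degree + 1), c i * coeff d (X i * E ^ i)) :
    HasSum (fun i => c i • (X i * E ^ i)) E := by
  rw [hasSum_iff_hasSum_coeff]
  intro d
  simp only [map_smul, smul_eq_mul, hE d]
  refine hasSum_sum_of_ne_finset_zero fun i hi => ?_
  rw [← smul_eq_mul, ← map_smul]
  refine coeff_of_lt_order (lt_of_lt_of_le ?_ (le_order_smul_X_mul_pow hE0 (c i) i i))
  rw [Finset.mem_range, not_lt] at hi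
  exact_mod_cast Nat.lt_succ_of_le (by omega)

theorem summable_smul_X_mul_pow_pred (hE0 : constantCoeff E = 0) (a : ℕ → R) :
    Summable fun i => a i • (X i * E ^ (i - 1)) := by
  refine summable_of_tendsto_order_atTop_nhds_top ?_
  simp_rw [ENat.tendsto_nhds_top_iff_natCast_lt, eventually_atTop]
  refine fun n => ⟨n + 1, fun i hi => lt_of_lt_of_le ?_ (le_order_smul_X_mul_pow hE0 _ _ _)⟩
  exact_mod_cast (by omega : n < i - 1 + 1)

end CommSemiring

section CommRing

variable {R : Type*} [CommRing R] [TopologicalSpace R] [IsTopologicalRing R]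
  {c : ℕ → R} {E : MvPowerSeries ℕ R}

theorem hasSum_mul_pderiv_of_hasSum (hE : HasSum (fun i => c i • (X i * E ^ i)) E) (j : ℕ) :
    HasSum (fun i => ((c i * i) • (X i * E ^ (i - 1))) * pderiv R j E)
      (pderiv R j E - c j • E ^ j) := by
  have hD := hE.map (pderiv R j) (continuous_pderiv j)
  have hδ : HasSum (fun i => c i • (E ^ i * pderiv R j (X i))) (c j • E ^ j) := by
    convert hasSum_single (f := fun i => c i • (E ^ i * pderiv R j (X i))) j
      (fun i hi => by simp [pderiv_X_of_ne hi]) using 1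
    simp
  have hterm : ∀ i, ((c i * i) • (X i * E ^ (i - 1))) * pderiv R j E =
      pderiv R j (c i • (X i * E ^ i)) - c i • (E ^ i * pderiv R j (X i)) := fun i => by
    rw [Derivation.map_smul, Derivation.leibniz, pderiv_pow]
    simp only [smul_eq_C_mul, map_mul, map_natCast]
    ring
  have h := hD.sub hδ
  simp only [Function.comp_apply, ← hterm] at h
  exact h

variable [T2Space R]

-- The junk power `E ^ (0 - 1)` is harmless: its coefficient `c 0 * 0` vanishes.
theorem one_sub_mul_pderiv_eq (hE0 : constantCoeff E = 0)
    (hE : HasSum (fun i => c i • (X i * E ^ i)) E) (j : ℕ) :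
    (1 - ∑' i, (c i * i) • (X i * E ^ (i - 1))) * pderiv R j E = c j • E ^ j := by
  have hG := (summable_smul_X_mul_pow_pred hE0 fun i => c i * i).hasSum.mul_right (pderiv R j E)
  rw [sub_mul, one_mul, hG.unique (hasSum_mul_pderiv_of_hasSum hE j), sub_sub_cancel]

theorem smul_pderiv_eq_smul_pow_mul_pderiv_zero (hE0 : constantCoeff E = 0)
    (hE : HasSum (fun i => c i • (X i * E ^ i)) E) (i : ℕ) :
    c 0 • pderiv R i E = c i • (E ^ i * pderiv R 0 E) := by
  set G := ∑' i, (c i * i) • (X i * E ^ (i - 1))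
  calc c 0 • pderiv R i E = ((1 - G) * pderiv R 0 E) * pderiv R i E := by
        rw [one_sub_mul_pderiv_eq hE0 hE, pow_zero, smul_mul_assoc, one_mul]
    _ = ((1 - G) * pderiv R i E) * pderiv R 0 E := by ring
    _ = c i • (E ^ i * pderiv R 0 E) := by
        rw [one_sub_mul_pderiv_eq hE0 hE, smul_mul_assoc]

end CommRing

end MvPowerSeries

theorem pd_eq_pderiv (j : ℕ) : pd j = MvPowerSeries.pderiv ℚ j := by
  funext F
  ext d
  rw [MvPowerSeries.coeff_pderiv]
  show (d j + 1 : ℕ) • MvPowerSeries.coeff (d + Finsupp.single j 1) F = _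
  rw [nsmul_eq_mul]
  push_cast
  ring

/-- The formal power series `E(t)` defined by `B_t(E(t)) = 0`
(the unique solution with zero constant term, the equation stated coefficientwise)
satisfies the Riemann–Hopf hierarchy: `∂E/∂tᵢ = (Eⁱ/i!)·∂E/∂t₀` for every `i ≥ 0`. -/
theorem E_satisfies_Riemann_Hopf
    (E : MvPowerSeries ℕ ℚ)
    (hE0 : MvPowerSeries.constantCoeff E = 0)
    (hEeq : ∀ d : ℕ →₀ ℕ,
      MvPowerSeries.coeff d E =
        ∑ i ∈ Finset.range ((d.sum fun _ m => m) + 1),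
          (i.factorial : ℚ)⁻¹ * MvPowerSeries.coeff d (MvPowerSeries.X i * E ^ i)) :
    ∀ i : ℕ, pd i E = (i.factorial : ℚ)⁻¹ • (E ^ i * pd 0 E) := by
  intro i
  have hE := MvPowerSeries.hasSum_smul_X_mul_pow_of_coeff_eq (c := fun i => (i ! : ℚ)⁻¹) hE0 hEeq
  simpa [pd_eq_pderiv] using MvPowerSeries.smul_pderiv_eq_smul_pow_mul_pderiv_zero hE0 hE i
end

section
/- The matrices A(i,m) = (1/(2^m m!)) Σ_{j=0}^m (−1)^{m−j} (2j+1)^i C(m,j) (for i ≥ m ≥ 0) and P(m,i) defined by Σ_i P(m,i) z^i = ∏_{k=0}^{m−1}(z−(2k+1)) are inverse to each other in the following sense: for all n ≥ m ≥ 0, Σ_{i=m}^{n} P(n,i) A(i,m) = δ_{n,m}. -/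
/-!
Expanding `A(i,m)`, the sum `∑ᵢ P(n,i) A(i,m)` becomes
`(2^m m!)⁻¹ ∑_{j ≤ m} (-1)^(m-j) C(m,j) pₙ(2j+1)` with `pₙ = ∏_{k<n} (z - (2k+1))`.
Since `pₙ` vanishes at `1, 3, …, 2n-1` and `m ≤ n`, only the term `j = m = n` survives, and there
`pₙ(2n+1) = 2ⁿ n!`. The range of summation may be extended to `i < m` because `A(i,m)` is then the
`m`-th finite difference of a polynomial of degree `i < m`, which vanishes.
-/

/-- `A(i,m) = (1/(2^m m!)) ∑_{j=0}^{m} (−1)^{m−j} (2j+1)^i C(m,j)`. -/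
noncomputable def Acoef (i m : ℕ) : ℚ :=
  ((2 : ℚ) ^ m * m.factorial)⁻¹ *
    ∑ j ∈ Finset.range (m + 1), (-1 : ℚ) ^ (m - j) * (2 * (j : ℚ) + 1) ^ i * m.choose j

open Finset Polynomial
open scoped fwdDiff

theorem sum_neg_one_pow_mul_choose_eq_fwdDiff_iter {R : Type*} [Ring R] (f : R → R) (m : ℕ) :
    ∑ j ∈ range (m + 1), (-1 : R) ^ (m - j) * m.choose j * f j = (Δ_[1])^[m] f 0 := by
  rw [fwdDiff_iter_eq_sum_shift]
  refine sum_congr rfl fun j _ => ?_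
  simp [zsmul_eq_mul]

theorem Acoef_eq_zero_of_lt {i m : ℕ} (h : i < m) : Acoef i m = 0 := by
  have hdeg : ((C 2 * X + 1) ^ i : ℚ[X]).natDegree < m :=
    (natDegree_pow_le_of_le i (natDegree_linear_le (a := 2) (b := 1))).trans_lt (by simpa using h)
  have hdiff := congrFun (fwdDiff_iter_eq_zero_of_degree_lt hdeg) 0
  rw [← sum_neg_one_pow_mul_choose_eq_fwdDiff_iter] at hdiff
  simp only [eval_pow, eval_add, eval_mul, eval_C, eval_X, eval_one, Pi.zero_apply] at hdiff
  simp [Acoef, mul_right_comm, hdiff]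

theorem sum_mul_Acoef (a : ℕ → ℚ) (N m : ℕ) :
    ∑ i ∈ range N, a i * Acoef i m = ((2 : ℚ) ^ m * m.factorial)⁻¹ *
      ∑ j ∈ range (m + 1), (-1 : ℚ) ^ (m - j) * m.choose j *
        (∑ i ∈ range N, C (a i) * X ^ i).eval (2 * (j : ℚ) + 1) := by
  simp only [Acoef, eval_finsetSum, eval_mul, eval_C, eval_pow, eval_X, mul_sum]
  rw [sum_comm]
  exact sum_congr rfl fun i _ => sum_congr rfl fun j _ => by ring

variable {R : Type*} [CommRing R]

theorem eval_prod_X_sub_odd_of_lt {j n : ℕ} (h : j < n) :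
    (∏ k ∈ range n, (X - C (2 * (k : R) + 1))).eval (2 * (j : R) + 1) = 0 := by
  rw [eval_prod]
  exact prod_eq_zero (mem_range.2 h) (by simp)

theorem eval_prod_X_sub_odd_self (n : ℕ) :
    (∏ k ∈ range n, (X - C (2 * (k : R) + 1))).eval (2 * (n : R) + 1) =
      (2 ^ n * n.factorial : R) := by
  calc (∏ k ∈ range n, (X - C (2 * (k : R) + 1))).eval (2 * (n : R) + 1)
      = ∏ k ∈ range n, 2 * ((n - k : ℕ) : R) := by
        rw [eval_prod]
        refine prod_congr rfl fun k hk => ?_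
        rw [Nat.cast_sub (mem_range.1 hk).le]
        simp only [eval_sub, eval_X, eval_C]
        ring
    _ = 2 ^ n * n.factorial := by
        rw [prod_mul_distrib, prod_const, card_range, ← Nat.cast_prod,
          ← Nat.descFactorial_eq_prod_range, Nat.descFactorial_self]

theorem sum_neg_one_pow_mul_choose_mul_eval_prod_X_sub_odd {m n : ℕ} (h : m ≤ n) :
    ∑ j ∈ range (m + 1), (-1 : R) ^ (m - j) * m.choose j *
        (∏ k ∈ range n, (X - C (2 * (k : R) + 1))).eval (2 * (j : R) + 1) =
      if n = m then (2 ^ m * m.factorial : R) else 0 := by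
  split_ifs with hnm
  · subst hnm
    rw [sum_range_succ, sum_eq_zero fun j hj => by
      rw [eval_prod_X_sub_odd_of_lt (mem_range.1 hj), mul_zero], eval_prod_X_sub_odd_self]
    simp
  · exact sum_eq_zero fun j hj => by
      rw [eval_prod_X_sub_odd_of_lt (by grind), mul_zero]

/-- The matrices `A(i,m)` and `P(m,i)` (the latter defined by
`∑_i P(m,i) z^i = ∏_{k=0}^{m−1} (z − (2k+1))`) are mutually inverse:
for all `n ≥ m ≥ 0`, `∑_{i=m}^{n} P(n,i) A(i,m) = δ_{n,m}`. -/
theorem P_A_inverse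
    (P : ℕ → ℕ → ℚ)
    (hP : ∀ m : ℕ, ∏ k ∈ Finset.range m, (Polynomial.X - Polynomial.C (2 * (k : ℚ) + 1)) =
      ∑ i ∈ Finset.range (m + 1), Polynomial.C (P m i) * Polynomial.X ^ i) :
    ∀ n m : ℕ, m ≤ n →
      ∑ i ∈ Finset.Icc m n, P n i * Acoef i m = if n = m then 1 else 0 := by
  intro n m hmn
  have hrange : ∑ i ∈ Icc m n, P n i * Acoef i m = ∑ i ∈ range (n + 1), P n i * Acoef i m := by
    refine sum_subset (fun i hi => by grind) fun i _ hi => ?_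
    rw [Acoef_eq_zero_of_lt (by grind), mul_zero]
  rw [hrange, sum_mul_Acoef, ← hP n, sum_neg_one_pow_mul_choose_mul_eval_prod_X_sub_odd hmn]
  split_ifs
  · exact inv_mul_cancel₀ (by positivity)
  · exact mul_zero _
end

section
/- As formal power series in v over ℚ[q], (1+2qv)^{-1/2} · log(1+2qv)/(2q) = Σ_{m≥1} P(m,1) q^{m−1} v^m / m!, where P(m,1) = (−1)^{m−1} (2m−1)!! Σ_{j=0}^{m−1} 1/(2j+1). -/
/-!
Put `A = 1 + aX` with `a = 2q`. The operator `T f = 2A f' + a f` kills `g = A^{-1/2}`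
(differentiate `g²A = 1` and cancel the unit `g`), and since `L' = 1/A`, the Leibniz rule gives
`T (gL) = 2g`.
Coefficientwise `(T f)ₙ = 2(n+1) fₙ₊₁ + (2n+1) a fₙ`, so over a torsion-free ring a series is
determined by its image under `T` and its constant term. It remains to check that the claimed
coefficients of `g` and of `gL` obey these two recurrences; for `gL` the recurrence produces the
odd harmonic sums `∑ 1/(2j+1)`.
-/

open PowerSeries Nat

section InvSqrtOperator

variable {R : Type*} [CommRing R]

/-- `2(1 + aX) f' + a f = 2 (1 + aX)^{1/2} ((1 + aX)^{1/2} f)'`, so it annihilates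
`(1 + aX)^{-1/2}`. -/
noncomputable def invSqrtOp (a : R) (f : R⟦X⟧) : R⟦X⟧ :=
  2 * ((1 + C a * X) * d⁄dX R f) + C a * f

theorem coeff_invSqrtOp (a : R) (f : R⟦X⟧) (n : ℕ) :
    coeff n (invSqrtOp a f) = 2 * (n + 1) * coeff (n + 1) f + (2 * n + 1) * a * coeff n f := by
  rw [invSqrtOp, ← map_ofNat C 2]
  simp only [map_add, coeff_C_mul, add_mul, one_mul, mul_assoc, coeff_derivative]
  rcases n with _ | n
  · simp only [coeff_zero_X_mul]; push_cast; ring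
  · simp only [coeff_succ_X_mul, coeff_derivative]; push_cast; ring

theorem eq_of_invSqrtOp_eq [IsAddTorsionFree R] {a : R} {f g : R⟦X⟧}
    (h : invSqrtOp a f = invSqrtOp a g) (h0 : constantCoeff f = constantCoeff g) : f = g := by
  ext n
  induction n with
  | zero => simpa using h0
  | succ n ih =>
    have hn := congrArg (coeff n) h
    rw [coeff_invSqrtOp, coeff_invSqrtOp, ih, add_left_inj] at hn
    refine nsmul_right_injective (M := R) (n := 2 * (n + 1)) (by omega) ?_
    simpa [nsmul_eq_mul] using hn

theorem invSqrtOp_eq_zero_of_mul_self_mul_eq_one {a : R} {g : R⟦X⟧}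
    (hg : g * g * (1 + C a * X) = 1) : invSqrtOp a g = 0 := by
  have hunit : IsUnit g := IsUnit.of_mul_eq_one (g * (1 + C a * X)) (by rw [← mul_assoc, hg])
  refine hunit.mul_right_eq_zero.mp ?_
  have hd := congrArg (d⁄dX R) hg
  simp only [Derivation.leibniz, smul_eq_mul, map_add, derivative_one, derivative_C,
    derivative_X] at hd
  simp only [invSqrtOp]
  linear_combination hd

theorem invSqrtOp_mul (a : R) (f g : R⟦X⟧) :
    invSqrtOp a (f * g) = invSqrtOp a f * g + 2 * ((1 + C a * X) * d⁄dX R g) * f := by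
  simp only [invSqrtOp, Derivation.leibniz, smul_eq_mul]
  ring

theorem one_add_C_mul_X_mul_mk_neg_pow (a : R) : (1 + C a * X) * mk (fun n => (-a) ^ n) = 1 := by
  have h := congrArg (rescale (-a)) (mk_one_mul_one_sub_eq_one R)
  rw [map_mul, map_sub, map_one, rescale_X, rescale_mk] at h
  simpa [mul_comm, sub_eq_add_neg] using h

end InvSqrtOperator

def invSqrtCoeff (n : ℕ) : ℚ := (-1) ^ n * ((2 * n - 1)‼ : ℚ) / n !

def oddHarmonic (m : ℕ) : ℚ := ∑ j ∈ Finset.range m, (2 * (j : ℚ) + 1)⁻¹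

/-- The paper's `P(m,1) / m!`. -/
def sqrtLogCoeff (m : ℕ) : ℚ :=
  (-1) ^ (m - 1) * ((2 * m - 1)‼ : ℚ) * oddHarmonic m / m !

theorem succ_mul_invSqrtCoeff_succ (n : ℕ) :
    (n + 1) * invSqrtCoeff (n + 1) = -((2 * n + 1) * invSqrtCoeff n) := by
  have hdf : (2 * (n + 1) - 1)‼ = (2 * n + 1) * (2 * n - 1)‼ := by
    rw [show 2 * (n + 1) - 1 = 2 * n + 1 by omega, Nat.doubleFactorial_add_one]
  simp only [invSqrtCoeff, hdf, Nat.factorial_succ]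
  push_cast
  field_simp
  ring

theorem sqrtLogCoeff_eq_neg_invSqrtCoeff_mul (m : ℕ) :
    sqrtLogCoeff m = -(invSqrtCoeff m * oddHarmonic m) := by
  rcases m with _ | m
  · simp [sqrtLogCoeff, oddHarmonic]
  · simp only [sqrtLogCoeff, invSqrtCoeff, Nat.add_sub_cancel, pow_succ]
    ring

theorem succ_mul_sqrtLogCoeff_succ_add (n : ℕ) :
    (n + 1) * sqrtLogCoeff (n + 1) + (2 * n + 1) * sqrtLogCoeff n = invSqrtCoeff n := by
  have hodd : (2 * (n : ℚ) + 1) ≠ 0 := by positivity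
  rw [sqrtLogCoeff_eq_neg_invSqrtCoeff_mul, sqrtLogCoeff_eq_neg_invSqrtCoeff_mul, oddHarmonic,
    Finset.sum_range_succ, ← oddHarmonic]
  linear_combination (-(oddHarmonic n + (2 * (n : ℚ) + 1)⁻¹)) * succ_mul_invSqrtCoeff_succ n
    + invSqrtCoeff n * mul_inv_cancel₀ hodd

theorem invSqrtOp_mk_invSqrtCoeff :
    invSqrtOp (Polynomial.C 2 * Polynomial.X)
      (mk fun n => Polynomial.C (invSqrtCoeff n) * Polynomial.X ^ n) = 0 := by
  ext1 n
  have h := congrArg (Polynomial.C (R := ℚ)) (succ_mul_invSqrtCoeff_succ n)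
  simp only [map_mul, map_add, map_neg, map_natCast, map_one, map_ofNat] at h
  rw [coeff_invSqrtOp, coeff_mk, coeff_mk, map_zero, map_ofNat]
  linear_combination 2 * Polynomial.X ^ (n + 1) * h

theorem invSqrtOp_mk_sqrtLogCoeff :
    invSqrtOp (Polynomial.C 2 * Polynomial.X)
        (mk fun m => Polynomial.C (sqrtLogCoeff m) * Polynomial.X ^ (m - 1)) =
      2 * mk fun n => Polynomial.C (invSqrtCoeff n) * Polynomial.X ^ n := by
  ext1 n
  have h := congrArg (Polynomial.C (R := ℚ)) (succ_mul_sqrtLogCoeff_succ_add n)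
  simp only [map_mul, map_add, map_natCast, map_one, map_ofNat] at h
  rw [coeff_invSqrtOp, coeff_mk, coeff_mk, ← map_ofNat C 2, coeff_C_mul, coeff_mk, map_ofNat]
  rcases n with _ | n
  · simp [sqrtLogCoeff, oddHarmonic, invSqrtCoeff]
  · push_cast at h ⊢
    linear_combination 2 * Polynomial.X ^ (n + 1) * h

theorem derivative_eq_mk_neg_pow {L : PowerSeries (Polynomial ℚ)}
    (hL : ∀ n : ℕ, PowerSeries.coeff n L =
      if n = 0 then 0 else
        Polynomial.C ((-1 : ℚ) ^ (n - 1) * 2 ^ (n - 1) / n) * Polynomial.X ^ (n - 1)) :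
    d⁄dX _ L = mk fun n => (-(Polynomial.C 2 * Polynomial.X)) ^ n := by
  ext1 n
  have hc : (-1 : ℚ) ^ n * 2 ^ n / (n + 1 : ℕ) * (n + 1) = (-2) ^ n := by
    rw [neg_pow (2 : ℚ) n]
    field_simp
    push_cast
    ring
  rw [coeff_derivative, hL, if_neg n.succ_ne_zero, Nat.add_sub_cancel, coeff_mk,
    show -(Polynomial.C 2 * Polynomial.X) = Polynomial.C (-2 : ℚ) * Polynomial.X by simp,
    mul_pow, ← map_pow, ← hc]
  simp only [map_mul, map_add, map_natCast, map_one]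
  ring

/-- As formal power series in `v` over `ℚ[q]`,
`(1+2qv)^{-1/2} · log(1+2qv)/(2q) = ∑_{m≥1} P(m,1) q^{m−1} v^m / m!`, where
`P(m,1) = (−1)^{m−1} (2m−1)!! ∑_{j=0}^{m−1} 1/(2j+1)`.
Here `g = (1+2qv)^{-1/2}` is characterized by `g²·(1+2qv) = 1` with constant term `1`,
and `L = log(1+2qv)/(2q) = ∑_{n≥1} (−1)^{n−1} 2^{n−1} q^{n−1} vⁿ / n`. -/
theorem sqrt_log_series_identity
    (g L : PowerSeries (Polynomial ℚ))
    (hg : g * g * (1 + PowerSeries.C (Polynomial.C 2 * Polynomial.X) *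
      PowerSeries.X) = 1)
    (hg0 : PowerSeries.constantCoeff g = 1)
    (hL : ∀ n : ℕ, PowerSeries.coeff n L =
      if n = 0 then 0 else
        Polynomial.C ((-1 : ℚ) ^ (n - 1) * 2 ^ (n - 1) / n) * Polynomial.X ^ (n - 1)) :
    g * L = PowerSeries.mk fun m =>
      Polynomial.C ((-1 : ℚ) ^ (m - 1) * ((2 * m - 1).doubleFactorial : ℚ) *
        (∑ j ∈ Finset.range m, (2 * (j : ℚ) + 1)⁻¹) / m.factorial) *
        Polynomial.X ^ (m - 1) := by
  show g * L = mk fun m => Polynomial.C (sqrtLogCoeff m) * Polynomial.X ^ (m - 1)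
  have hg_op := invSqrtOp_eq_zero_of_mul_self_mul_eq_one hg
  have hg_eq : g = mk fun n => Polynomial.C (invSqrtCoeff n) * Polynomial.X ^ n :=
    eq_of_invSqrtOp_eq (by rw [hg_op, invSqrtOp_mk_invSqrtCoeff]) (by simp [hg0, invSqrtCoeff])
  have hL_deriv : (1 + C (Polynomial.C 2 * Polynomial.X) * X) * d⁄dX _ L = 1 := by
    rw [derivative_eq_mk_neg_pow hL, one_add_C_mul_X_mul_mk_neg_pow]
  apply eq_of_invSqrtOp_eq
  · rw [invSqrtOp_mul, hg_op, hL_deriv, invSqrtOp_mk_sqrtLogCoeff, ← hg_eq]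
    ring
  · have hL0 : constantCoeff L = 0 := by simpa using hL 0
    simp [hL0, sqrtLogCoeff, oddHarmonic]
end

section
/- Let D_S for S ∈ R[[U]] be the derivations of the Riemann–Hopf hierarchy acting on the differential polynomial ring R[[U]][U_1, U_2, ...], defined by D_S(U) = S(U)·U_1, extended as derivations commuting with the total derivative ∂ = Σ_{m≥0} U_{m+1} ∂/∂U_m. Then the derivations pairwise commute: [D_{S_1}, D_{S_2}] = 0 for all S_1, S_2. -/
namespace MvPolynomial

theorem derivation_ext_of_C_of_X {R S σ M : Type*} [CommSemiring R] [CommSemiring S]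
    [Algebra R S] [AddCommMonoid M] [Module (MvPolynomial σ S) M] [Module R M]
    {D₁ D₂ : Derivation R (MvPolynomial σ S) M}
    (hC : ∀ f, D₁ (C f) = D₂ (C f)) (hX : ∀ i, D₁ (X i) = D₂ (X i)) : D₁ = D₂ := by
  ext p
  induction p using MvPolynomial.induction_on with
  | C f => exact hC f
  | add p q hp hq => rw [map_add, map_add, hp, hq]
  | mul_X p i hp => rw [Derivation.leibniz, Derivation.leibniz, hp, hX]

theorem derivation_commute_of_C_of_X {R S σ : Type*} [CommRing R] [CommRing S] [Algebra R S]
    {E F : Derivation R (MvPolynomial σ S) (MvPolynomial σ S)}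
    (hC : ∀ f, E (F (C f)) = F (E (C f))) (hX : ∀ i, E (F (X i)) = F (E (X i))) :
    Function.Commute E F := by
  have hEF : ⁅E, F⁆ = 0 := derivation_ext_of_C_of_X
    (fun f => by rw [Derivation.commutator_apply, hC, sub_self, Derivation.zero_apply])
    (fun i => by rw [Derivation.commutator_apply, hX, sub_self, Derivation.zero_apply])
  intro p
  rw [← sub_eq_zero, ← Derivation.commutator_apply, hEF, Derivation.zero_apply]

end MvPolynomial

open MvPolynomial

namespace RiemannHopf

variable {R : Type*} [CommRing R]
  {del : Derivation R (MvPolynomial ℕ (PowerSeries R)) (MvPolynomial ℕ (PowerSeries R))}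
  {D : PowerSeries R →
    Derivation R (MvPolynomial ℕ (PowerSeries R)) (MvPolynomial ℕ (PowerSeries R))}

theorem commute_del
    (hdelC : ∀ f : PowerSeries R, del (C f) = C (d1 f) * X 0)
    (hdelX : ∀ m : ℕ, del (X m) = X (m + 1))
    (hDC : ∀ S f : PowerSeries R, D S (C f) = C (d1 f) * (C S * X 0))
    (hDX : ∀ (S : PowerSeries R) (m : ℕ), D S (X m) = (⇑del)^[m + 1] (C S * X 0))
    (S : PowerSeries R) : Function.Commute (D S) del := by
  refine derivation_commute_of_C_of_X (fun f => ?_) (fun m => ?_)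
  · simp only [hdelC, hDC, hDX, Derivation.leibniz, smul_eq_mul, hdelX, zero_add,
      Function.iterate_one]
    ring
  · rw [hdelX, hDX, hDX, Function.iterate_succ_apply' _ (m + 1)]

theorem apply_C_mul_X_zero_comm
    (hdelC : ∀ f : PowerSeries R, del (C f) = C (d1 f) * X 0)
    (hdelX : ∀ m : ℕ, del (X m) = X (m + 1))
    (hDC : ∀ S f : PowerSeries R, D S (C f) = C (d1 f) * (C S * X 0))
    (hDX : ∀ (S : PowerSeries R) (m : ℕ), D S (X m) = (⇑del)^[m + 1] (C S * X 0))
    (S₁ S₂ : PowerSeries R) : D S₁ (C S₂ * X 0) = D S₂ (C S₁ * X 0) := by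
  simp only [hDC, hDX, Derivation.leibniz, smul_eq_mul, hdelC, hdelX, zero_add,
    Function.iterate_one]
  ring

end RiemannHopf

/-- Let `A = R[[U]][U₁, U₂, …]` be the differential polynomial ring,
realized as `MvPolynomial ℕ (PowerSeries R)` with the variable `X m` playing the role of
`U_{m+1}` and the coefficient ring `R[[U]]` embedded via `C`.  Let `∂` be the total
derivative (the derivation with `∂(C f) = C(f')·U₁` and `∂ U_m = U_{m+1}`), and for each
`S ∈ R[[U]]` let `D S` be the Riemann–Hopf derivation, i.e. the derivation commuting with
`∂` determined by `D S (U) = S(U)·U₁` (so `D S (C f) = C(f')·C(S)·U₁` and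
`D S (U_{m+1}) = ∂^{m+1}(C(S)·U₁)`).  Then the derivations pairwise commute:
`[D S₁, D S₂] = 0` for all `S₁, S₂`. -/
theorem riemann_hopf_derivations_commute
    {R : Type*} [CommRing R]
    (del : Derivation R (MvPolynomial ℕ (PowerSeries R)) (MvPolynomial ℕ (PowerSeries R)))
    (hdelC : ∀ f : PowerSeries R,
      del (MvPolynomial.C f) = MvPolynomial.C (d1 f) * MvPolynomial.X 0)
    (hdelX : ∀ m : ℕ, del (MvPolynomial.X m) = MvPolynomial.X (m + 1))
    (D : PowerSeries R →
      Derivation R (MvPolynomial ℕ (PowerSeries R)) (MvPolynomial ℕ (PowerSeries R)))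
    (hDC : ∀ (S : PowerSeries R) (f : PowerSeries R),
      D S (MvPolynomial.C f) =
        MvPolynomial.C (d1 f) * (MvPolynomial.C S * MvPolynomial.X 0))
    (hDX : ∀ (S : PowerSeries R) (m : ℕ),
      D S (MvPolynomial.X m) = (⇑del)^[m + 1] (MvPolynomial.C S * MvPolynomial.X 0)) :
    ∀ (S₁ S₂ : PowerSeries R) (a : MvPolynomial ℕ (PowerSeries R)),
      D S₁ (D S₂ a) = D S₂ (D S₁ a) := by
  intro S₁ S₂
  have hsymm := RiemannHopf.apply_C_mul_X_zero_comm hdelC hdelX hDC hDX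
  have hdel := RiemannHopf.commute_del hdelC hdelX hDC hDX
  refine derivation_commute_of_C_of_X (fun f => ?_) (fun m => ?_)
  · rw [hDC, hDC, (D S₁).leibniz (C (d1 f)), (D S₂).leibniz (C (d1 f)), hDC, hDC, hsymm S₁ S₂]
    simp only [smul_eq_mul]
    ring
  · rw [hDX, hDX, (hdel S₁).iterate_right, (hdel S₂).iterate_right, hsymm]
end
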